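/- (Recursive form of u under the optimal baseline) With b = b*, i.e., b_t(s,a) = q_{π,t}(s,a): u_{π,T−1}(s,a) = 0 for all (s,a), and for all t ∈ {0,…,T−2} and all (s,a), u_{π,t}(s,a) = ν_{π,t}(s,a) + Σ_{s'} Σ_{a'} p(s'|s,a) · π_{t+1}(a'|s') · (π_{t+1}(a'|s')/μ*_{t+1}(a'|s')) · u_{π,t+1}(s',a'), where each summand with μ*_{t+1}(a'|s') = 0 is zero (since then π_{t+1}(a'|s')·u_{π,t+1}(s',a') = 0); equivalently, u_{π,t}(s,a) = ν_{π,t}(s,a) + Σ_{s'} p(s'|s,a)·( Σ_{a'} π_{t+1}(a'|s')√(u_{π,t+1}(s',a')) )². -/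

import Mathlib

/-!
With the baseline `b = q`, the correction `r + G_{t+1} - q` has zero conditional mean given the
first action, so `E[G_t | s] = v_t(s)` under every behavior policy `μ`, and `G_t - v_t` is the
importance weight `π/μ` times `(G_{t+1} - v_{t+1}) + (v_{t+1} - E v_{t+1})`. Its second moment is
therefore `Σ_a π (π/μ) (ν + Σ_{s'} p Var(G_{t+1} | s'))`, and the bracket is `u_t` once
`μ = μ*`. Since `μ* ∝ π √u`, the sum `Σ_a π (π/μ*) u` collapses to `(Σ_a π √u)²`.
-/

open Finset

namespace DOpt

variable {S A : Type}

/-- A time-indexed policy: for each time step and state, a probability distribution on actions. -/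
def IsPolicy [Fintype A] (μ : ℕ → S → A → ℝ) : Prop :=
  ∀ t s, (∀ a, 0 ≤ μ t s a) ∧ ∑ a, μ t s a = 1

/-- A transition probability kernel on the finite state space. -/
def IsKernel [Fintype S] (p : S → A → S → ℝ) : Prop :=
  ∀ s a, (∀ s', 0 ≤ p s a s') ∧ ∑ s', p s a s' = 1

/-- Action value `q_{π,t}(s,a)` computed with `n` remaining transitions after time `t`
(`n = T - 1 - t` in a horizon-`T` MDP). -/
noncomputable def qval [Fintype S] [Fintype A] (p : S → A → S → ℝ) (π : ℕ → S → A → ℝ)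
    (r : S → A → ℝ) : ℕ → ℕ → S → A → ℝ
  | 0, _, s, a => r s a
  | n + 1, t, s, a =>
      r s a + ∑ s', p s a s' * ∑ a', π (t + 1) s' a' * qval p π r n (t + 1) s' a'

/-- `q_{π,t}(s,a)` in the horizon-`T` MDP. -/
noncomputable def qf [Fintype S] [Fintype A] (T : ℕ) (p : S → A → S → ℝ)
    (π : ℕ → S → A → ℝ) (r : S → A → ℝ) (t : ℕ) (s : S) (a : A) : ℝ :=
  qval p π r (T - 1 - t) t s a

/-- `v_{π,t}(s) = Σ_a π_t(a|s) q_{π,t}(s,a)`. -/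
noncomputable def vf [Fintype S] [Fintype A] (T : ℕ) (p : S → A → S → ℝ)
    (π : ℕ → S → A → ℝ) (r : S → A → ℝ) (t : ℕ) (s : S) : ℝ :=
  ∑ a, π t s a * qf T p π r t s a

/-- `ν_{π,t}(s,a) = Var_{s' ∼ p(·|s,a)}(v_{π,t+1}(s'))` for `t ≤ T-2`, and `0` at `t = T-1`. -/
noncomputable def nuf [Fintype S] [Fintype A] (T : ℕ) (p : S → A → S → ℝ)
    (π : ℕ → S → A → ℝ) (r : S → A → ℝ) (t : ℕ) (s : S) (a : A) : ℝ :=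
  if t + 2 ≤ T then
    (∑ s', p s a s' * (vf T p π r (t + 1) s') ^ 2) -
      (∑ s', p s a s' * vf T p π r (t + 1) s') ^ 2
  else 0

/-- Trajectories with `n` further transitions after the first action:
`(a_t, s_{t+1}, a_{t+1}, …, s_{t+n}, a_{t+n})`. -/
def Traj (S A : Type) : ℕ → Type
  | 0 => A
  | n + 1 => A × S × Traj S A n

/-- Expectation, over trajectories generated by the behavior policy `μ` starting at time `t`
in state `s` with `n` further transitions, of a function `f` of the trajectory. -/
noncomputable def Exp [Fintype S] [Fintype A] (p : S → A → S → ℝ) (μ : ℕ → S → A → ℝ) :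
    (n : ℕ) → ℕ → S → (Traj S A n → ℝ) → ℝ
  | 0, t, s, f => ∑ a, μ t s a * f a
  | n + 1, t, s, f =>
      ∑ a, μ t s a * ∑ s', p s a s' * Exp p μ n (t + 1) s' (fun τ => f (a, s', τ))

/-- Conditional variance of a function of the trajectory, given `S_t = s`. -/
noncomputable def Var [Fintype S] [Fintype A] (p : S → A → S → ℝ) (μ : ℕ → S → A → ℝ)
    (n : ℕ) (t : ℕ) (s : S) (f : Traj S A n → ℝ) : ℝ :=
  Exp p μ n t s (fun τ => (f τ) ^ 2) - (Exp p μ n t s f) ^ 2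

/-- `b̄_t(s) = Σ_a π_t(a|s) b_t(s,a)`. -/
noncomputable def bbar [Fintype A] (π : ℕ → S → A → ℝ) (b : ℕ → S → A → ℝ)
    (t : ℕ) (s : S) : ℝ :=
  ∑ a, π t s a * b t s a

/-- The per-decision importance-sampling estimator `G^b` with baseline `b`, target policy `π`
and behavior policy `μ`, as a function of the trajectory from time `t` (with `n` further
transitions, `n = T - 1 - t`). -/
noncomputable def Gest [Fintype S] [Fintype A] (π μ : ℕ → S → A → ℝ) (r : S → A → ℝ)
    (b : ℕ → S → A → ℝ) : (n : ℕ) → ℕ → S → Traj S A n → ℝ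
  | 0, t, s, a => (π t s a / μ t s a) * (r s a - b t s a) + bbar π b t s
  | n + 1, t, s, (a, s', τ) =>
      (π t s a / μ t s a) * (r s a + Gest π μ r b n (t + 1) s' τ - b t s a) + bbar π b t s

/-- Normalization of a weight vector into a probability distribution; the uniform distribution
when the total weight vanishes. -/
noncomputable def normPol [Fintype A] (w : A → ℝ) (a : A) : ℝ :=
  if (∑ a', w a') = 0 then ((Fintype.card A : ℝ))⁻¹ else w a / ∑ a', w a'

/-- `u_{π,t}(s,a)` (with baseline `b`), defined backwards in time together with the optimal
behavior policy `μ*`; the first argument is the number `n = T - 1 - t` of remaining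
transitions after time `t`. -/
noncomputable def uAux [Fintype S] [Fintype A] (T : ℕ) (p : S → A → S → ℝ)
    (π : ℕ → S → A → ℝ) (r : S → A → ℝ) (b : ℕ → S → A → ℝ) :
    ℕ → ℕ → S → A → ℝ
  | 0, t, s, a => (qf T p π r t s a - b t s a) ^ 2
  | n + 1, t, s, a =>
      (qf T p π r t s a - b t s a) ^ 2 + nuf T p π r t s a +
        ∑ s', p s a s' *
          Var p
            (fun t' s₁ a₁ => normPol (fun a₂ =>
              π t' s₁ a₂ * Real.sqrt (uAux T p π r b (n - (t' - (t + 1))) t' s₁ a₂)) a₁)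
            n (t + 1) s'
            (Gest π
              (fun t' s₁ a₁ => normPol (fun a₂ =>
                π t' s₁ a₂ * Real.sqrt (uAux T p π r b (n - (t' - (t + 1))) t' s₁ a₂)) a₁)
              r b n (t + 1) s')
  termination_by n => n
  decreasing_by all_goals omega

/-- `u_{π,t}(s,a)` in the horizon-`T` MDP, with baseline `b`. -/
noncomputable def uf [Fintype S] [Fintype A] (T : ℕ) (p : S → A → S → ℝ)
    (π : ℕ → S → A → ℝ) (r : S → A → ℝ) (b : ℕ → S → A → ℝ) (t : ℕ) (s : S) (a : A) : ℝ :=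
  uAux T p π r b (T - 1 - t) t s a

/-- The optimal behavior policy `μ*_t(a|s) ∝ π_t(a|s) √(u_{π,t}(s,a))` tailored to the
baseline `b` (uniform when all the weights vanish). -/
noncomputable def mustar [Fintype S] [Fintype A] (T : ℕ) (p : S → A → S → ℝ)
    (π : ℕ → S → A → ℝ) (r : S → A → ℝ) (b : ℕ → S → A → ℝ) (t : ℕ) (s : S) (a : A) : ℝ :=
  normPol (fun a' => π t s a' * Real.sqrt (uf T p π r b t s a')) a

/-- Conditional expectation `E[G^b(τ^μ_{t:T-1}) | S_t = s]`. -/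
noncomputable def ExpG [Fintype S] [Fintype A] (T : ℕ) (p : S → A → S → ℝ)
    (π μ : ℕ → S → A → ℝ) (r : S → A → ℝ) (b : ℕ → S → A → ℝ) (t : ℕ) (s : S) : ℝ :=
  Exp p μ (T - 1 - t) t s (Gest π μ r b (T - 1 - t) t s)

/-- Conditional variance `Var(G^b(τ^μ_{t:T-1}) | S_t = s)`. -/
noncomputable def VarG [Fintype S] [Fintype A] (T : ℕ) (p : S → A → S → ℝ)
    (π μ : ℕ → S → A → ℝ) (r : S → A → ℝ) (b : ℕ → S → A → ℝ) (t : ℕ) (s : S) : ℝ :=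
  Var p μ (T - 1 - t) t s (Gest π μ r b (T - 1 - t) t s)

/-- Membership in the enlarged policy-search space
`Λ = {μ : ∀ t,s,a, μ_t(a|s) = 0 → π_t(a|s)·u_{π,t}(s,a) = 0}`. -/
def inLambda [Fintype S] [Fintype A] (T : ℕ) (p : S → A → S → ℝ)
    (π : ℕ → S → A → ℝ) (r : S → A → ℝ) (b : ℕ → S → A → ℝ) (μ : ℕ → S → A → ℝ) : Prop :=
  ∀ t s a, t < T → μ t s a = 0 → π t s a * uf T p π r b t s a = 0


/-- The optimal baseline `b*_t(s,a) = q_{π,t}(s,a)`. -/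
noncomputable def bstar [Fintype S] [Fintype A] (T : ℕ) (p : S → A → S → ℝ)
    (π : ℕ → S → A → ℝ) (r : S → A → ℝ) : ℕ → S → A → ℝ :=
  fun t s a => qf T p π r t s a

/-- The zero baseline: with it, `Gest` is the plain PDIS estimator `G^{PDIS}`. -/
def zerob : ℕ → S → A → ℝ := fun _ _ _ => 0

section Expectation

variable [Fintype S] [Fintype A] (p : S → A → S → ℝ) (μ : ℕ → S → A → ℝ)

lemma Exp_add (n t : ℕ) (s : S) (f g : Traj S A n → ℝ) :
    Exp p μ n t s (fun τ => f τ + g τ) = Exp p μ n t s f + Exp p μ n t s g := by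
  induction n generalizing t s with
  | zero => simp only [Exp, mul_add, sum_add_distrib]
  | succ n ih => simp only [Exp, ih, mul_add, sum_add_distrib]

lemma Exp_const_mul (n t : ℕ) (s : S) (c : ℝ) (f : Traj S A n → ℝ) :
    Exp p μ n t s (fun τ => c * f τ) = c * Exp p μ n t s f := by
  induction n generalizing t s with
  | zero => simp only [Exp, mul_sum, mul_left_comm]
  | succ n ih => simp only [Exp, ih, mul_sum, mul_left_comm]

lemma Exp_congr_policy {μ' : ℕ → S → A → ℝ} {n t : ℕ} (h : ∀ t', t ≤ t' → μ t' = μ' t')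
    (s : S) (f : Traj S A n → ℝ) : Exp p μ n t s f = Exp p μ' n t s f := by
  induction n generalizing t s with
  | zero => simp only [Exp, h t le_rfl]
  | succ n ih =>
    have ih' := fun s' g => ih (t := t + 1) (fun t' ht' => h t' (by omega)) s' g
    simp only [Exp, h t le_rfl, ih']

variable {p μ}

lemma Exp_const (hp : IsKernel p) (hμ : IsPolicy μ) (n t : ℕ) (s : S) (c : ℝ) :
    Exp p μ n t s (fun _ => c) = c := by
  induction n generalizing t s with
  | zero => rw [Exp, ← sum_mul, (hμ t s).2, one_mul]
  | succ n ih =>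
    simp only [Exp, ih, ← sum_mul, (hp _ _).2, one_mul, (hμ t s).2]

lemma Exp_nonneg (hp : IsKernel p) (hμ : IsPolicy μ) (n t : ℕ) (s : S)
    {f : Traj S A n → ℝ} (hf : ∀ τ, 0 ≤ f τ) : 0 ≤ Exp p μ n t s f := by
  induction n generalizing t s with
  | zero => exact sum_nonneg fun a _ => mul_nonneg ((hμ t s).1 a) (hf a)
  | succ n ih =>
    exact sum_nonneg fun a _ => mul_nonneg ((hμ t s).1 a) <|
      sum_nonneg fun s' _ => mul_nonneg ((hp s a).1 s') (ih (t + 1) s' fun τ => hf _)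

lemma Exp_sq_sub (hp : IsKernel p) (hμ : IsPolicy μ) (n t : ℕ) (s : S)
    (f : Traj S A n → ℝ) (c : ℝ) :
    Exp p μ n t s (fun τ => (f τ - c) ^ 2) = Var p μ n t s f + (Exp p μ n t s f - c) ^ 2 := by
  have hexpand : (fun τ => (f τ - c) ^ 2) = fun τ => f τ ^ 2 + (-2 * c * f τ + c ^ 2) := by
    funext τ; ring
  rw [hexpand, Exp_add, Exp_add, Exp_const_mul, Exp_const hp hμ, Var]
  ring

lemma Var_eq_Exp_sq_sub (hp : IsKernel p) (hμ : IsPolicy μ) {n t : ℕ} {s : S}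
    {f : Traj S A n → ℝ} {c : ℝ} (hf : Exp p μ n t s f = c) :
    Var p μ n t s f = Exp p μ n t s (fun τ => (f τ - c) ^ 2) := by
  rw [Exp_sq_sub hp hμ, hf, sub_self, zero_pow two_ne_zero, add_zero]

lemma Var_nonneg (hp : IsKernel p) (hμ : IsPolicy μ) (n t : ℕ) (s : S)
    (f : Traj S A n → ℝ) : 0 ≤ Var p μ n t s f := by
  rw [Var_eq_Exp_sq_sub hp hμ rfl]
  exact Exp_nonneg hp hμ n t s fun τ => sq_nonneg _

lemma Var_const (hp : IsKernel p) (hμ : IsPolicy μ) (n t : ℕ) (s : S) (c : ℝ) :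
    Var p μ n t s (fun _ => c) = 0 := by
  rw [Var, Exp_const hp hμ, Exp_const hp hμ, sub_self]

end Expectation

lemma sum_mul_sq_sub_sum_mul {ι : Type*} [Fintype ι] {w : ι → ℝ} (hw : ∑ i, w i = 1)
    (x : ι → ℝ) :
    ∑ i, w i * (x i - ∑ j, w j * x j) ^ 2 = ∑ i, w i * x i ^ 2 - (∑ i, w i * x i) ^ 2 := by
  have hexpand : ∀ i, w i * (x i - ∑ j, w j * x j) ^ 2 =
      w i * x i ^ 2 - 2 * (∑ j, w j * x j) * (w i * x i) + (∑ j, w j * x j) ^ 2 * w i :=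
    fun i => by ring
  simp only [hexpand, sum_add_distrib, sum_sub_distrib, ← mul_sum, hw]
  ring

-- Also at `m = 0`, where both sides vanish because `x / 0 = 0`.
lemma mul_div_sq_eq (m x : ℝ) : m * (x / m) ^ 2 = x * (x / m) := by
  rcases eq_or_ne m 0 with rfl | hm
  · simp
  · field_simp

section ActionValue

variable [Fintype S] [Fintype A] {T : ℕ} {p : S → A → S → ℝ} {π : ℕ → S → A → ℝ}
  {r : S → A → ℝ} {t : ℕ} (s : S) (a : A)

lemma qf_of_le (h : T ≤ t + 1) : qf T p π r t s a = r s a := by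
  rw [qf, show T - 1 - t = 0 by omega, qval]

lemma qf_eq_add_sum_vf (h : t + 2 ≤ T) :
    qf T p π r t s a = r s a + ∑ s', p s a s' * vf T p π r (t + 1) s' := by
  rw [qf, show T - 1 - t = T - 1 - (t + 1) + 1 by omega, qval]
  rfl

lemma bbar_bstar : bbar π (bstar T p π r) t s = vf T p π r t s := rfl

lemma nuf_eq_sum_sq (hp : IsKernel p) (h : t + 2 ≤ T) :
    nuf T p π r t s a = ∑ s', p s a s' *
      (vf T p π r (t + 1) s' - ∑ s'', p s a s'' * vf T p π r (t + 1) s'') ^ 2 := by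
  rw [nuf, if_pos h, sum_mul_sq_sub_sum_mul (hp s a).2]

lemma nuf_nonneg (hp : IsKernel p) : 0 ≤ nuf T p π r t s a := by
  by_cases h : t + 2 ≤ T
  · rw [nuf_eq_sum_sq s a hp h]
    exact sum_nonneg fun s' _ => mul_nonneg ((hp s a).1 s') (sq_nonneg _)
  · rw [nuf, if_neg h]

end ActionValue

lemma Gest_congr_policy [Fintype S] [Fintype A] {π μ μ' : ℕ → S → A → ℝ} {r : S → A → ℝ}
    {b : ℕ → S → A → ℝ} {n t : ℕ} (h : ∀ t', t ≤ t' → μ t' = μ' t') (s : S) :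
    Gest π μ r b n t s = Gest π μ' r b n t s := by
  induction n generalizing t s with
  | zero => funext a; simp only [Gest, h t le_rfl]
  | succ n ih =>
    funext ⟨a, s', τ⟩
    simp only [Gest, h t le_rfl, ih (t := t + 1) (fun t' ht' => h t' (by omega))]

section OptimalBaseline

variable [Fintype S] [Fintype A] {T : ℕ} {p : S → A → S → ℝ} {π μ : ℕ → S → A → ℝ}
  {r : S → A → ℝ}

lemma Exp_Gest_bstar (hp : IsKernel p) (hμ : IsPolicy μ) {n t : ℕ} (ht : t + n + 1 = T)
    (s : S) : Exp p μ n t s (Gest π μ r (bstar T p π r) n t s) = vf T p π r t s := by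
  induction n generalizing t s with
  | zero =>
    simp only [Exp, Gest, bstar, qf_of_le _ _ ht.ge, sub_self, mul_zero, zero_add]
    rw [← sum_mul, (hμ t s).2, one_mul, bbar_bstar]
  | succ n ih =>
    have hcond : ∀ a, ∑ s', p s a s' * Exp p μ n (t + 1) s'
        (fun τ => Gest π μ r (bstar T p π r) (n + 1) t s (a, s', τ)) = vf T p π r t s := by
      intro a
      have hfun : ∀ s', (fun τ => Gest π μ r (bstar T p π r) (n + 1) t s (a, s', τ)) =
          fun τ => π t s a / μ t s a * Gest π μ r (bstar T p π r) n (t + 1) s' τ +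
            (π t s a / μ t s a * (r s a - qf T p π r t s a) + vf T p π r t s) := by
        intro s'
        funext τ
        simp only [Gest, bstar, bbar_bstar]
        ring
      simp only [hfun, Exp_add, Exp_const_mul, Exp_const hp hμ, ih (t := t + 1) (by omega), mul_add,
        sum_add_distrib, mul_left_comm (p s a _), ← mul_sum, ← sum_mul, (hp s a).2, one_mul,
        qf_eq_add_sum_vf s a (show t + 2 ≤ T by omega)]
      ring
    simp only [Exp, hcond, ← sum_mul, (hμ t s).2, one_mul]

lemma sum_Exp_sq_Gest_bstar (hp : IsKernel p) (hμ : IsPolicy μ) {n t : ℕ}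
    (ht : t + n + 2 = T) (s : S) (a : A) :
    ∑ s', p s a s' * Exp p μ n (t + 1) s'
        (fun τ => (Gest π μ r (bstar T p π r) (n + 1) t s (a, s', τ) - vf T p π r t s) ^ 2) =
      (π t s a / μ t s a) ^ 2 * (nuf T p π r t s a +
        ∑ s', p s a s' * Var p μ n (t + 1) s' (Gest π μ r (bstar T p π r) n (t + 1) s')) := by
  have hq := qf_eq_add_sum_vf (p := p) (π := π) (r := r) s a (show t + 2 ≤ T by omega)
  have hcond : ∀ s', Exp p μ n (t + 1) s'
      (fun τ => (Gest π μ r (bstar T p π r) (n + 1) t s (a, s', τ) - vf T p π r t s) ^ 2) =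
        (π t s a / μ t s a) ^ 2 * (Var p μ n (t + 1) s' (Gest π μ r (bstar T p π r) n (t + 1) s')
          + (vf T p π r (t + 1) s' - ∑ s'', p s a s'' * vf T p π r (t + 1) s'') ^ 2) := by
    intro s'
    have hfun : (fun τ =>
        (Gest π μ r (bstar T p π r) (n + 1) t s (a, s', τ) - vf T p π r t s) ^ 2) = fun τ =>
          (π t s a / μ t s a) ^ 2 * (Gest π μ r (bstar T p π r) n (t + 1) s' τ -
            ∑ s'', p s a s'' * vf T p π r (t + 1) s'') ^ 2 := by
      funext τ
      simp only [Gest, bstar, bbar_bstar, hq]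
      ring
    rw [hfun, Exp_const_mul, Exp_sq_sub hp hμ, Exp_Gest_bstar hp hμ (by omega)]
  simp only [hcond, nuf_eq_sum_sq s a hp (show t + 2 ≤ T by omega), mul_add, sum_add_distrib,
    mul_left_comm (p s a _), ← mul_sum]
  ring

lemma VarG_bstar_succ (hp : IsKernel p) (hμ : IsPolicy μ) {t : ℕ} (ht : t + 2 ≤ T) (s : S) :
    VarG T p π μ r (bstar T p π r) t s = ∑ a, π t s a * (π t s a / μ t s a *
      (nuf T p π r t s a + ∑ s', p s a s' * VarG T p π μ r (bstar T p π r) (t + 1) s')) := by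
  obtain ⟨n, hn⟩ : ∃ n, T - 1 - t = n + 1 := ⟨T - 2 - t, by omega⟩
  have hn' : T - 1 - (t + 1) = n := by omega
  rw [VarG, hn, Var_eq_Exp_sq_sub hp hμ (Exp_Gest_bstar hp hμ (by omega) s)]
  simp only [VarG]
  rw [hn']
  simp only [Exp, sum_Exp_sq_Gest_bstar hp hμ (show t + n + 2 = T by omega),
    ← mul_assoc, mul_div_sq_eq]

lemma VarG_bstar_last (hp : IsKernel p) (hμ : IsPolicy μ) (s : S) :
    VarG T p π μ r (bstar T p π r) (T - 1) s = 0 := by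
  have hq : ∀ a, qf T p π r (T - 1) s a = r s a := fun a => qf_of_le s a (by omega)
  have hG : Gest π μ r (bstar T p π r) 0 (T - 1) s = fun _ => vf T p π r (T - 1) s := by
    refine funext fun (a : A) => ?_
    simp only [Gest, bstar, hq, sub_self, mul_zero, zero_add, bbar_bstar]
  rw [VarG, Nat.sub_self, hG, Var_const hp hμ]

end OptimalBaseline

section Normalization

variable [Fintype A]

lemma normPol_nonneg {w : A → ℝ} (hw : ∀ a, 0 ≤ w a) (a : A) : 0 ≤ normPol w a := by
  unfold normPol
  split_ifs
  · positivity
  · exact div_nonneg (hw a) (sum_nonneg fun a' _ => hw a')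

lemma sum_normPol [Nonempty A] (w : A → ℝ) : ∑ a, normPol w a = 1 := by
  by_cases h : ∑ a', w a' = 0
  · simp only [normPol, if_pos h, sum_const, card_univ, nsmul_eq_mul]
    exact mul_inv_cancel₀ (Nat.cast_ne_zero.mpr Fintype.card_ne_zero)
  · simp only [normPol, if_neg h, ← sum_div, div_self h]

lemma sum_mul_div_normPol {π u : A → ℝ} (hπ : ∀ a, 0 ≤ π a) (hu : ∀ a, 0 ≤ u a) :
    ∑ a, π a * (π a / normPol (fun a' => π a' * √(u a')) a * u a) =
      (∑ a, π a * √(u a)) ^ 2 := by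
  have hvanish : ∀ a, π a * √(u a) = 0 → ∀ c, π a * (π a / c * u a) = 0 := by
    intro a h c
    rcases mul_eq_zero.mp h with h | h
    · simp [h]
    · simp [Real.sqrt_eq_zero (hu a) |>.mp h]
  by_cases hW : ∑ a, π a * √(u a) = 0
  · have hzero := (sum_eq_zero_iff_of_nonneg fun a _ =>
      mul_nonneg (hπ a) (Real.sqrt_nonneg (u a))).mp hW
    rw [hW, sum_eq_zero fun a _ => hvanish a (hzero a (mem_univ a)) _]
    ring
  · rw [sq, sum_mul]
    refine sum_congr rfl fun a _ => ?_
    by_cases hwa : π a * √(u a) = 0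
    · rw [hvanish a hwa, hwa, zero_mul]
    · have hπa : π a ≠ 0 := left_ne_zero_of_mul hwa
      have hua : √(u a) ≠ 0 := right_ne_zero_of_mul hwa
      rw [normPol, if_neg hW]
      field_simp
      rw [Real.sq_sqrt (hu a)]

end Normalization

section OptimalBehavior

variable [Fintype S] [Fintype A] {T : ℕ} {p : S → A → S → ℝ} {π : ℕ → S → A → ℝ}
  {r : S → A → ℝ} {b : ℕ → S → A → ℝ} {t : ℕ} (s : S) (a : A)

lemma isPolicy_mustar [Nonempty A] (hπ : IsPolicy π) : IsPolicy (mustar T p π r b) :=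
  fun t s => ⟨normPol_nonneg fun a => mul_nonneg ((hπ t s).1 a) (Real.sqrt_nonneg _),
    sum_normPol _⟩

lemma uf_of_le (h : T ≤ t + 1) : uf T p π r b t s a = (qf T p π r t s a - b t s a) ^ 2 := by
  rw [uf, show T - 1 - t = 0 by omega, uAux]

/-- The policy built inside `uAux` agrees with `μ*` at all times `≥ t + 1`, the only times the
variance term looks at. -/
lemma uf_succ (h : t + 2 ≤ T) :
    uf T p π r b t s a = (qf T p π r t s a - b t s a) ^ 2 + nuf T p π r t s a +
      ∑ s', p s a s' * VarG T p π (mustar T p π r b) r b (t + 1) s' := by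
  obtain ⟨n, hn⟩ : ∃ n, T - 1 - t = n + 1 := ⟨T - 2 - t, by omega⟩
  have hwindow : ∀ t', t + 1 ≤ t' →
      (fun s₁ a₁ => normPol (fun a₂ =>
        π t' s₁ a₂ * √(uAux T p π r b (n - (t' - (t + 1))) t' s₁ a₂)) a₁) =
        mustar T p π r b t' := by
    intro t' ht'
    funext s₁ a₁
    simp only [mustar, uf]
    rw [show T - 1 - t' = n - (t' - (t + 1)) by omega]
  rw [uf, hn, uAux]
  simp only [VarG, Var, Gest_congr_policy hwindow, Exp_congr_policy p _ hwindow]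
  rw [show T - 1 - (t + 1) = n by omega]

lemma uf_nonneg [Nonempty A] (hp : IsKernel p) (hπ : IsPolicy π) : 0 ≤ uf T p π r b t s a := by
  by_cases h : t + 2 ≤ T
  · rw [uf_succ s a h]
    refine add_nonneg (add_nonneg (sq_nonneg _) (nuf_nonneg s a hp)) ?_
    exact sum_nonneg fun s' _ => mul_nonneg ((hp s a).1 s')
      (Var_nonneg hp (isPolicy_mustar hπ) _ _ _ _)
  · rw [uf_of_le s a (by omega)]
    exact sq_nonneg _

lemma uf_bstar_of_le (h : T ≤ t + 1) : uf T p π r (bstar T p π r) t s a = 0 := by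
  rw [uf_of_le s a h, bstar, sub_self, sq, mul_zero]

lemma uf_bstar_succ (h : t + 2 ≤ T) :
    uf T p π r (bstar T p π r) t s a = nuf T p π r t s a +
      ∑ s', p s a s' * VarG T p π (mustar T p π r (bstar T p π r)) r (bstar T p π r) (t + 1) s' := by
  rw [uf_succ s a h, bstar, sub_self, sq, mul_zero, zero_add]

lemma VarG_mustar_bstar [Nonempty A] (hp : IsKernel p) (hπ : IsPolicy π) (h : t + 1 ≤ T) :
    VarG T p π (mustar T p π r (bstar T p π r)) r (bstar T p π r) t s =
      ∑ a, π t s a * (π t s a / mustar T p π r (bstar T p π r) t s a *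
        uf T p π r (bstar T p π r) t s a) := by
  by_cases h2 : t + 2 ≤ T
  · simp only [VarG_bstar_succ hp (isPolicy_mustar hπ) h2, uf_bstar_succ _ _ h2]
  · obtain rfl : t = T - 1 := by omega
    have hu : ∀ a, uf T p π r (bstar T p π r) (T - 1) s a = 0 :=
      fun a => uf_bstar_of_le s a (by omega)
    simp only [VarG_bstar_last hp (isPolicy_mustar hπ), hu, mul_zero, sum_const_zero]

end OptimalBehavior

theorem u_recursive_form_general {S A : Type} [Fintype S] [Fintype A] [Nonempty A]
    (T : ℕ)
    (p : S → A → S → ℝ) (hp : IsKernel p)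
    (r : S → A → ℝ)
    (π : ℕ → S → A → ℝ) (hπ : IsPolicy π) :
    (∀ (s : S) (a : A), uf T p π r (bstar T p π r) (T - 1) s a = 0) ∧
    (∀ (t : ℕ), t + 2 ≤ T → ∀ (s : S) (a : A),
      uf T p π r (bstar T p π r) t s a =
        nuf T p π r t s a +
          ∑ s', ∑ a', p s a s' * (π (t + 1) s' a' *
            ((π (t + 1) s' a' / mustar T p π r (bstar T p π r) (t + 1) s' a') *
              uf T p π r (bstar T p π r) (t + 1) s' a')) ∧
      uf T p π r (bstar T p π r) t s a =
        nuf T p π r t s a +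
          ∑ s', p s a s' *
            (∑ a', π (t + 1) s' a' *
              Real.sqrt (uf T p π r (bstar T p π r) (t + 1) s' a')) ^ 2) := by
  refine ⟨fun s a => uf_bstar_of_le s a (by omega), fun t ht s a => ?_⟩
  have hVarG := fun s' => VarG_mustar_bstar (r := r) (t := t + 1) s' hp hπ (by omega)
  have hsq : ∀ s', ∑ a', π (t + 1) s' a' * (π (t + 1) s' a' /
      mustar T p π r (bstar T p π r) (t + 1) s' a' * uf T p π r (bstar T p π r) (t + 1) s' a') =
        (∑ a', π (t + 1) s' a' * √(uf T p π r (bstar T p π r) (t + 1) s' a')) ^ 2 :=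
    fun s' => sum_mul_div_normPol (hπ _ _).1 fun a' => uf_nonneg s' a' hp hπ
  rw [uf_bstar_succ s a ht]
  simp only [hVarG]
  exact ⟨by simp only [mul_sum], by simp only [hsq]⟩

/-- Recursive form of `u` under the optimal baseline: with `b = b*`, i.e.
`b_t(s,a) = q_{π,t}(s,a)`, one has `u_{π,T−1} ≡ 0` and, for `t ∈ {0,…,T−2}`,
`u_{π,t}(s,a) = ν_{π,t}(s,a) + Σ_{s'} Σ_{a'} p(s'|s,a)·π_{t+1}(a'|s')·(π_{t+1}(a'|s')/μ*_{t+1}(a'|s'))·u_{π,t+1}(s',a')`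
(summands with `μ*_{t+1}(a'|s') = 0` being zero), equivalently
`u_{π,t}(s,a) = ν_{π,t}(s,a) + Σ_{s'} p(s'|s,a)·(Σ_{a'} π_{t+1}(a'|s')√(u_{π,t+1}(s',a')))²`. -/
theorem u_recursive_form {S A : Type} [Fintype S] [Fintype A] [Nonempty A]
    (T : ℕ) (hT : 1 ≤ T)
    (p : S → A → S → ℝ) (hp : IsKernel p)
    (r : S → A → ℝ)
    (π : ℕ → S → A → ℝ) (hπ : IsPolicy π) :
    (∀ (s : S) (a : A), uf T p π r (bstar T p π r) (T - 1) s a = 0) ∧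
    (∀ (t : ℕ), t + 2 ≤ T → ∀ (s : S) (a : A),
      uf T p π r (bstar T p π r) t s a =
        nuf T p π r t s a +
          ∑ s', ∑ a', p s a s' * (π (t + 1) s' a' *
            ((π (t + 1) s' a' / mustar T p π r (bstar T p π r) (t + 1) s' a') *
              uf T p π r (bstar T p π r) (t + 1) s' a')) ∧
      uf T p π r (bstar T p π r) t s a =
        nuf T p π r t s a +
          ∑ s', p s a s' *
            (∑ a', π (t + 1) s' a' *
              Real.sqrt (uf T p π r (bstar T p π r) (t + 1) s' a')) ^ 2) :=
  u_recursive_form_general T p hp r π hπ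

end DOpt
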